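/- arXiv:2405.19024 — 4 statements merged into one kernel-verified Lean document; each statement's English description precedes it below -/
import Mathlib

section
/- The set K_γ of discounted state-action occupancy measures is a convex and compact subset of ℝ^{S×A}. -/
/-- The set `K_γ` of discounted state-action occupancy measures is a
convex and compact subset of `ℝ^{S×A}`. -/
theorem occupancy_polytope_convex_compact
    {S A : Type} [Fintype S] [Fintype A] [Nonempty S] [Nonempty A]
    (T : S → A → S → ℝ) (μ0 : S → ℝ) (γ : ℝ)
    (hT0 : ∀ s a s', 0 ≤ T s a s') (hT1 : ∀ s a, ∑ s', T s a s' = 1)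
    (hμ0 : ∀ s, 0 ≤ μ0 s) (hμ1 : ∑ s, μ0 s = 1)
    (hγ : γ ∈ Set.Ioo (0 : ℝ) 1) :
    Convex ℝ {d : S × A → ℝ | (∀ p, 0 ≤ d p) ∧ ∀ s, ∑ a, d (s, a)
        = (1 - γ) * μ0 s + γ * ∑ p : S × A, T p.1 p.2 s * d p} ∧
    IsCompact {d : S × A → ℝ | (∀ p, 0 ≤ d p) ∧ ∀ s, ∑ a, d (s, a)
        = (1 - γ) * μ0 s + γ * ∑ p : S × A, T p.1 p.2 s * d p} := by
  set K := {d : S × A → ℝ | (∀ p, 0 ≤ d p) ∧ ∀ s, ∑ a, d (s, a)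
      = (1 - γ) * μ0 s + γ * ∑ p : S × A, T p.1 p.2 s * d p} with hK
  -- total mass of any element is 1
  have hmass : ∀ d ∈ K, ∑ p : S × A, d p = 1 := by
    intro d hd
    obtain ⟨h0, heq⟩ := hd
    have h1 : ∑ p : S × A, d p = ∑ s, ∑ a, d (s, a) := Fintype.sum_prod_type d
    have h2 : ∑ s, ∑ a, d (s, a)
        = (1 - γ) * 1 + γ * ∑ p : S × A, d p := by
      rw [Finset.sum_congr rfl (fun s _ => heq s), Finset.sum_add_distrib,
        ← Finset.mul_sum, ← Finset.mul_sum, hμ1]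
      congr 1
      congr 1
      rw [Finset.sum_comm]
      refine Finset.sum_congr rfl fun p _ => ?_
      rw [← Finset.sum_mul, hT1, one_mul]
    have hγ1 : γ < 1 := hγ.2
    have h3 : ∑ p : S × A, d p = (1 - γ) * 1 + γ * ∑ p : S × A, d p := h1.trans h2
    have hne : (1 : ℝ) - γ ≠ 0 := by linarith [hγ.2]
    have h4 : (1 - γ) * (∑ p : S × A, d p) = (1 - γ) * 1 := by linear_combination h3
    exact mul_left_cancel₀ hne h4
  constructor
  · -- convexity
    intro x hx y hy a b ha hb hab
    refine ⟨fun p => add_nonneg (mul_nonneg ha (hx.1 p)) (mul_nonneg hb (hy.1 p)),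
      fun s => ?_⟩
    simp only [Pi.add_apply, Pi.smul_apply, smul_eq_mul]
    have hsum : ∑ p : S × A, T p.1 p.2 s * (a * x p + b * y p)
        = a * ∑ p : S × A, T p.1 p.2 s * x p + b * ∑ p : S × A, T p.1 p.2 s * y p := by
      rw [Finset.mul_sum, Finset.mul_sum, ← Finset.sum_add_distrib]
      exact Finset.sum_congr rfl fun p _ => by ring
    rw [hsum, Finset.sum_add_distrib, ← Finset.mul_sum, ← Finset.mul_sum,
      hx.2 s, hy.2 s]
    linear_combination ((1 - γ) * μ0 s) * hab
  · -- compactness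
    have hclosed : IsClosed K := by
      have : K = (⋂ p : S × A, {d : S × A → ℝ | 0 ≤ d p}) ∩
          ⋂ s : S, {d : S × A → ℝ | ∑ a, d (s, a)
            = (1 - γ) * μ0 s + γ * ∑ p : S × A, T p.1 p.2 s * d p} := by
        ext d
        simp [hK, Set.mem_iInter]
      rw [this]
      refine IsClosed.inter (isClosed_iInter fun p => isClosed_le continuous_const
        (continuous_apply p)) (isClosed_iInter fun s => isClosed_eq ?_ ?_)
      · exact continuous_finset_sum _ fun a _ => continuous_apply (s, a)
      · exact continuous_const.add (continuous_const.mul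
          (continuous_finset_sum _ fun p _ => continuous_const.mul (continuous_apply p)))
    have hbdd : Bornology.IsBounded K := by
      refine (Metric.isBounded_closedBall (x := (0 : S × A → ℝ)) (r := 1)).subset ?_
      intro d hd
      rw [Metric.mem_closedBall, dist_zero_right]
      refine (pi_norm_le_iff_of_nonneg zero_le_one).2 fun p => ?_
      rw [Real.norm_eq_abs, abs_le]
      constructor
      · linarith [hd.1 p]
      · calc d p ≤ ∑ q : S × A, d q :=
              Finset.single_le_sum (fun q _ => hd.1 q) (Finset.mem_univ p)
          _ = 1 := hmass d hd
    exact Metric.isCompact_of_isClosed_isBounded hclosed hbdd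
end

section
/- CURL cannot be reduced to standard RL (Lemma 1): there exist finite nonempty sets S and A, a transition kernel T : S × A → Δ(S), an initial distribution μ0 ∈ Δ(S), a discount γ ∈ (0,1), and a concave function F : ℝ^{S×A} → ℝ, such that for every stationary reward vector R ∈ ℝ^{S×A}, the argmax sets differ: {d ∈ K_γ | ∀ d' ∈ K_γ, ⟨d', R⟩ ≤ ⟨d, R⟩} ≠ {d ∈ K_γ | ∀ d' ∈ K_γ, F(d') ≤ F(d)}. -/
/-- The set `K_γ` of discounted state-action occupancy measures. -/
def occupancyPolytope {S A : Type} [Fintype S] [Fintype A]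
    (T : S → A → S → ℝ) (μ0 : S → ℝ) (γ : ℝ) : Set (S × A → ℝ) :=
  {d | (∀ p, 0 ≤ d p) ∧ ∀ s, ∑ a, d (s, a)
      = (1 - γ) * μ0 s + γ * ∑ p : S × A, T p.1 p.2 s * d p}

/-- Lemma 1: CURL cannot be reduced to standard RL: there exists an
MDP and a concave utility `F` such that for every stationary reward `R`, the argmax
set of `⟨·, R⟩` over `K_γ` differs from the argmax set of `F` over `K_γ`. -/
theorem curl_not_reducible_to_standard_rl :
    ∃ (nS nA : ℕ), 0 < nS ∧ 0 < nA ∧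
    ∃ (T : Fin nS → Fin nA → Fin nS → ℝ) (μ0 : Fin nS → ℝ) (γ : ℝ)
      (F : (Fin nS × Fin nA → ℝ) → ℝ),
      (∀ s a s', 0 ≤ T s a s') ∧ (∀ s a, ∑ s', T s a s' = 1) ∧
      (∀ s, 0 ≤ μ0 s) ∧ (∑ s, μ0 s = 1) ∧ γ ∈ Set.Ioo (0 : ℝ) 1 ∧
      ConcaveOn ℝ Set.univ F ∧
      ∀ R : Fin nS × Fin nA → ℝ,
        {d ∈ occupancyPolytope T μ0 γ |
            ∀ d' ∈ occupancyPolytope T μ0 γ, ∑ p, d' p * R p ≤ ∑ p, d p * R p} ≠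
        {d ∈ occupancyPolytope T μ0 γ |
            ∀ d' ∈ occupancyPolytope T μ0 γ, F d' ≤ F d} := by
  refine ⟨1, 2, one_pos, two_pos, fun _ _ _ => 1, fun _ => 1, 1/2,
    fun d => -(d 0 - 1/2)^2, fun _ _ _ => zero_le_one, ?_,
    fun _ => zero_le_one, ?_, ?_, ?_, ?_⟩
  · intro s a; simp
  · simp
  · constructor <;> norm_num
  · refine ⟨convex_univ, ?_⟩
    intro x _ y _ a b ha hb hab
    simp only [smul_eq_mul, Pi.add_apply, Pi.smul_apply]
    have hb' : b = 1 - a := by linarith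
    subst hb'
    nlinarith [mul_nonneg (mul_nonneg ha hb) (sq_nonneg (x 0 - y 0)),
      sq_nonneg (x 0 - y 0)]
  · -- characterize membership in the polytope
    have hK : ∀ d : Fin 1 × Fin 2 → ℝ,
        d ∈ occupancyPolytope (fun _ _ _ => (1:ℝ)) (fun _ => 1) (1/2) ↔
        (∀ p, 0 ≤ d p) ∧ d 0 + d (0, 1) = 1 := by
      intro d
      constructor
      · rintro ⟨h1, h2⟩
        refine ⟨h1, ?_⟩
        have := h2 0
        simp [Fintype.sum_prod_type, Fin.sum_univ_succ] at this
        have e : d 0 = d (0, 0) := rfl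
        linarith
      · rintro ⟨h1, h2⟩
        refine ⟨h1, ?_⟩
        intro s
        fin_cases s
        simp [Fintype.sum_prod_type, Fin.sum_univ_succ]
        have e : d 0 = d (0, 0) := rfl
        linarith
    have hsum : ∀ (d R : Fin 1 × Fin 2 → ℝ),
        ∑ p, d p * R p = d 0 * R 0 + d (0, 1) * R (0, 1) := by
      intro d R
      simp [Fintype.sum_prod_type, Fin.sum_univ_succ]
      rfl
    intro R h
    have h' := Set.ext_iff.mp h
    simp only [Set.mem_setOf_eq] at h'
    -- the midpoint and the vertices
    set dm : Fin 1 × Fin 2 → ℝ := fun _ => 1/2 with hdm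
    have hdmK : dm ∈ occupancyPolytope (fun _ _ _ => (1:ℝ)) (fun _ => 1) (1/2) := by
      rw [hK]; exact ⟨fun p => by norm_num [hdm], by norm_num [hdm]⟩
    set v0 : Fin 1 × Fin 2 → ℝ := fun p => if p.2 = 0 then 1 else 0 with hv0
    set v1 : Fin 1 × Fin 2 → ℝ := fun p => if p.2 = 0 then 0 else 1 with hv1
    have hv0K : v0 ∈ occupancyPolytope (fun _ _ _ => (1:ℝ)) (fun _ => 1) (1/2) := by
      rw [hK]
      exact ⟨fun p => by simp only [hv0]; split <;> norm_num, by norm_num [hv0]⟩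
    have hv1K : v1 ∈ occupancyPolytope (fun _ _ _ => (1:ℝ)) (fun _ => 1) (1/2) := by
      rw [hK]
      exact ⟨fun p => by simp only [hv1]; split <;> norm_num, by norm_num [hv1]⟩
    -- dm maximizes F, hence by h also maximizes ⟨·, R⟩
    have hdmR := (h' dm).mpr ⟨hdmK, fun d' _ => by
      have : -(d' 0 - 1/2)^2 ≤ 0 := neg_nonpos.mpr (sq_nonneg _)
      simpa [hdm] using this⟩
    have h0 := hdmR.2 v0 hv0K
    have h1 := hdmR.2 v1 hv1K
    rw [hsum, hsum] at h0 h1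
    simp only [hdm, hv0, hv1] at h0 h1
    norm_num at h0 h1
    have hReq : R 0 = R (0, 1) := by linarith
    -- then v0 maximizes ⟨·, R⟩, hence by h also maximizes F: contradiction
    have hv0R : ∀ d' ∈ occupancyPolytope (fun _ _ _ => (1:ℝ)) (fun _ => 1) (1/2),
        ∑ p, d' p * R p ≤ ∑ p, v0 p * R p := by
      intro d' hd'
      rw [hsum, hsum]
      have hs := ((hK d').mp hd').2
      have : d' 0 * R 0 + d' (0, 1) * R (0, 1) = R 0 := by
        rw [← hReq]; linear_combination R 0 * hs
      rw [this]
      simp only [hv0]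
      norm_num
    have hv0F := ((h' v0).mp ⟨hv0K, hv0R⟩).2 dm hdmK
    simp only [hdm, hv0] at hv0F
    norm_num at hv0F
end

section
/- The true reward can lie outside the standard IRL feasible set for CURL experts (Lemma 2): there exist finite nonempty sets S and A, a transition kernel T : S × A → Δ(S), an initial distribution μ0 ∈ Δ(S), a discount γ ∈ (0,1), a true reward r* ∈ ℝ^{S×A}, a regularization weight λ > 0, and a strictly positive reference distribution d^ρ ∈ K_γ, such that, with the concave utility F(d) = ⟨d, r*⟩ − λ ∑_{s,a} d(s,a) log(d(s,a)/d^ρ(s,a)) (with the convention 0·log 0 = 0), every maximizer d^E of F over K_γ satisfies ⟨d^E, r*⟩ < sup_{d ∈ K_γ} ⟨d, r*⟩; that is, the expert occupancy measure is not optimal for the standard RL objective with reward r*, so r* is excluded from the standard IRL feasible reward set of the expert policy. -/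
lemma mem_occ_iff (d : Fin 1 × Fin 2 → ℝ) :
    d ∈ occupancyPolytope (fun _ _ _ => (1:ℝ)) (fun _ => 1) (1/2) ↔
      (∀ p, 0 ≤ d p) ∧ d (0,0) + d (0,1) = 1 := by
  unfold occupancyPolytope
  simp only [Set.mem_setOf_eq, Fintype.sum_prod_type, Fin.sum_univ_one,
    Fin.sum_univ_two, one_mul, Fin.forall_fin_one]
  constructor
  · rintro ⟨h1, h2⟩
    exact ⟨h1, by linarith⟩
  · rintro ⟨h1, h2⟩
    exact ⟨h1, by rw [h2]; norm_num⟩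

/-- Lemma 2: The true reward can lie outside the standard IRL
feasible set for CURL experts: there exists an MDP, a true reward `r*`, a weight
`λ > 0` and a strictly positive prior `d^ρ ∈ K_γ` such that, with the
KL-regularized utility `F(d) = ⟨d, r*⟩ − λ ∑ d log(d/d^ρ)`, every maximizer `d^E`
of `F` over `K_γ` satisfies `⟨d^E, r*⟩ < sup_{d∈K_γ} ⟨d, r*⟩`. -/
theorem true_reward_outside_standard_irl_feasible_set :
    ∃ (nS nA : ℕ), 0 < nS ∧ 0 < nA ∧
    ∃ (T : Fin nS → Fin nA → Fin nS → ℝ) (μ0 : Fin nS → ℝ) (γ : ℝ)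
      (rstar : Fin nS × Fin nA → ℝ) (lam : ℝ) (dρ : Fin nS × Fin nA → ℝ),
      (∀ s a s', 0 ≤ T s a s') ∧ (∀ s a, ∑ s', T s a s' = 1) ∧
      (∀ s, 0 ≤ μ0 s) ∧ (∑ s, μ0 s = 1) ∧ γ ∈ Set.Ioo (0 : ℝ) 1 ∧
      0 < lam ∧ dρ ∈ occupancyPolytope T μ0 γ ∧ (∀ p, 0 < dρ p) ∧
      ∀ dE ∈ occupancyPolytope T μ0 γ,
        (∀ d ∈ occupancyPolytope T μ0 γ,
            (∑ p, d p * rstar p) - lam * ∑ p, d p * Real.log (d p / dρ p)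
              ≤ (∑ p, dE p * rstar p) - lam * ∑ p, dE p * Real.log (dE p / dρ p)) →
        (∑ p, dE p * rstar p)
          < sSup {x : ℝ | ∃ d ∈ occupancyPolytope T μ0 γ, x = ∑ p, d p * rstar p} := by
  refine ⟨1, 2, Nat.one_pos, by norm_num,
    fun _ _ _ => 1, fun _ => 1, 1/2,
    fun p => if p.2 = 0 then 1 else 0, 2, fun _ => 1/2,
    fun _ _ _ => zero_le_one, fun _ _ => by simp, fun _ => zero_le_one, by simp,
    by constructor <;> norm_num, by norm_num, ?_, fun _ => by norm_num, ?_⟩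
  · rw [mem_occ_iff]
    exact ⟨fun _ => by norm_num, by norm_num⟩
  · intro dE hdE hopt
    beta_reduce at hopt ⊢
    obtain ⟨hpos, hsum⟩ := (mem_occ_iff dE).1 hdE
    have hval : ∀ d : Fin 1 × Fin 2 → ℝ,
        (∑ p, d p * (if p.2 = 0 then (1:ℝ) else 0)) = d (0,0) := by
      intro d
      simp [Fintype.sum_prod_type, Fin.sum_univ_one, Fin.sum_univ_two]
    -- sSup of the set is 1
    set Kset : Set ℝ := {x : ℝ |
      ∃ d ∈ occupancyPolytope (fun (_ : Fin 1) (_ : Fin 2) (_ : Fin 1) => (1:ℝ)) (fun _ => 1) (1/2),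
      x = ∑ p : Fin 1 × Fin 2, d p * (if p.2 = 0 then (1:ℝ) else 0)} with hK
    have hmem1 : (1:ℝ) ∈ Kset := by
      refine ⟨fun p => if p.2 = 0 then 1 else 0, ?_, ?_⟩
      · rw [mem_occ_iff]
        exact ⟨fun p => by split <;> norm_num, by norm_num⟩
      · rw [hval]; norm_num
    have hbdd : ∀ x ∈ Kset, x ≤ 1 := by
      rintro x ⟨d, hd, rfl⟩
      obtain ⟨hp, hs⟩ := (mem_occ_iff d).1 hd
      rw [hval]
      have := hp (0,1)
      linarith
    have hsSup : sSup Kset = 1 :=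
      le_antisymm (csSup_le ⟨1, hmem1⟩ hbdd) (le_csSup ⟨1, hbdd⟩ hmem1)
    rw [hsSup, hval]
    rcases lt_or_eq_of_le (by have := hpos (0,1); linarith : dE (0,0) ≤ 1) with h | h
    · exact h
    · exfalso
      have h01 : dE (0,1) = 0 := by linarith
      have hopt' := hopt (fun _ => 1/2) ((mem_occ_iff _).2 ⟨fun _ => by norm_num, by norm_num⟩)
      rw [hval, hval] at hopt'
      simp only [Fintype.sum_prod_type, Fin.sum_univ_one, Fin.sum_univ_two] at hopt'
      rw [h, h01] at hopt'
      norm_num at hopt'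
      have hlog2 : Real.log 2 > 0.6931471803 := Real.log_two_gt_d9
      norm_num at hlog2
      linarith
end

section
/- No deterministic optimal policy for CURL in general: there exist finite nonempty sets S and A, a transition kernel T : S × A → Δ(S), an initial distribution μ0 ∈ Δ(S), a discount γ ∈ (0,1), and a concave function F : ℝ^{S×A} → ℝ, such that for every deterministic policy, i.e., every function f : S → A with induced policy π(a|s) = 1 if a = f(s) and 0 otherwise, the occupancy measure d^π is not a maximizer of F over K_γ: there exists d ∈ K_γ with F(d) > F(d^π). -/
/-- The state distributions `p_t` of a stationary policy: `p_0 = μ0` and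
`p_{t+1}(s) = ∑_{s',a'} T(s|s',a') π(a'|s') p_t(s')`. -/
noncomputable def stateDist {S A : Type} [Fintype S] [Fintype A]
    (T : S → A → S → ℝ) (π : S → A → ℝ) (μ0 : S → ℝ) : ℕ → S → ℝ
  | 0 => μ0
  | (t + 1) => fun s => ∑ p : S × A, T p.1 p.2 s * π p.1 p.2 * stateDist T π μ0 t p.1

/-- The discounted occupancy measure `d^π(s,a) = (1−γ) ∑_t γ^t p_t(s) π(a|s)`. -/
noncomputable def occMeasure {S A : Type} [Fintype S] [Fintype A]
    (T : S → A → S → ℝ) (π : S → A → ℝ) (μ0 : S → ℝ) (γ : ℝ) : S × A → ℝ :=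
  fun p => (1 - γ) * ∑' t : ℕ, γ ^ t * stateDist T π μ0 t p.1 * π p.1 p.2

lemma aux_stateDist (f : Fin 1 → Fin 2) (t : ℕ) (s : Fin 1) :
    stateDist (fun (_ : Fin 1) (_ : Fin 2) (_ : Fin 1) => (1 : ℝ))
      (fun s a => if a = f s then (1 : ℝ) else 0) (fun _ => 1) t s = 1 := by
  induction t generalizing s with
  | zero => rfl
  | succ t ih =>
    simp only [stateDist, ih]
    rw [Fintype.sum_prod_type]
    simp [Fin.sum_univ_two, Finset.sum_ite_eq']

/-- No deterministic optimal policy for CURL in general: there exists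
an MDP and a concave `F` such that for every deterministic policy `f : S → A`, the
induced occupancy measure is not a maximizer of `F` over `K_γ`. -/
theorem no_deterministic_optimal_policy_for_curl :
    ∃ (nS nA : ℕ), 0 < nS ∧ 0 < nA ∧
    ∃ (T : Fin nS → Fin nA → Fin nS → ℝ) (μ0 : Fin nS → ℝ) (γ : ℝ)
      (F : (Fin nS × Fin nA → ℝ) → ℝ),
      (∀ s a s', 0 ≤ T s a s') ∧ (∀ s a, ∑ s', T s a s' = 1) ∧
      (∀ s, 0 ≤ μ0 s) ∧ (∑ s, μ0 s = 1) ∧ γ ∈ Set.Ioo (0 : ℝ) 1 ∧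
      ConcaveOn ℝ Set.univ F ∧
      ∀ f : Fin nS → Fin nA,
        ∃ d ∈ occupancyPolytope T μ0 γ,
          F (occMeasure T (fun s a => if a = f s then (1 : ℝ) else 0) μ0 γ) < F d := by
  refine ⟨1, 2, one_pos, two_pos,
    fun _ _ _ => 1, fun _ => 1, 1/2,
    fun d => -(d (0, 0) - 1/2)^2, fun _ _ _ => zero_le_one,
    fun _ _ => by simp, fun _ => zero_le_one, by simp,
    ⟨by norm_num, by norm_num⟩, ?_, ?_⟩
  · refine ⟨convex_univ, fun x _ y _ a b ha hb hab => ?_⟩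
    simp only [smul_eq_mul, Pi.add_apply, Pi.smul_apply, smul_eq_mul]
    obtain rfl : b = 1 - a := by linarith
    nlinarith [mul_nonneg (mul_nonneg ha hb) (sq_nonneg (x (0,0) - y (0,0)))]
  · intro f
    refine ⟨fun _ => 1/2, ⟨fun _ => by norm_num, fun s => ?_⟩, ?_⟩
    · rw [Fin.sum_univ_two, Fintype.sum_prod_type]
      norm_num [Fin.sum_univ_two]
    · have hocc : ∀ p : Fin 1 × Fin 2,
          occMeasure (fun (_ : Fin 1) (_ : Fin 2) (_ : Fin 1) => (1 : ℝ))
            (fun s a => if a = f s then (1 : ℝ) else 0) (fun _ => 1) (1/2) p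
          = (if p.2 = f p.1 then (1 : ℝ) else 0) := by
        intro p
        simp only [occMeasure, aux_stateDist, mul_one]
        rw [tsum_mul_right, tsum_geometric_of_lt_one (by norm_num) (by norm_num)]
        norm_num
      dsimp only
      rw [hocc (0, 0)]
      rcases Fin.exists_fin_two.mp ⟨f 0, rfl⟩ with h | h <;>
        simp [h] <;> norm_num
end
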